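/- Let R, S be rings and M an (R,S)-bimodule which is an equivalence bimodule. Then M is finitely generated and projective as a left R-module, and finitely generated and projective as a right S-module. -/

import Mathlib

open scoped TensorProduct
open MulOpposite

namespace Paper

noncomputable section

/-- The subgroup of relators defining the balanced tensor product `M ⊗[S] N`
of a right `S`-module `M` and a left `S`-module `N`. -/
def balRel (S : Type*) [Ring S] (M : Type*) [AddCommGroup M] [Module Sᵐᵒᵖ M]
    (N : Type*) [AddCommGroup N] [Module S N] : AddSubgroup (M ⊗[ℤ] N) :=
  AddSubgroup.closure
    {x | ∃ (m : M) (s : S) (n : N), x = (op s • m) ⊗ₜ[ℤ] n - m ⊗ₜ[ℤ] (s • n)}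

/-- The balanced tensor product `M ⊗[S] N` of a right `S`-module `M` and a
left `S`-module `N`: the quotient of the tensor product `M ⊗[ℤ] N` of abelian
groups by the relations `(m • s) ⊗ n = m ⊗ (s • n)`. -/
def BalTensor (S : Type*) [Ring S] (M : Type*) [AddCommGroup M] [Module Sᵐᵒᵖ M]
    (N : Type*) [AddCommGroup N] [Module S N] : Type _ :=
  (M ⊗[ℤ] N) ⧸ balRel S M N

instance (S : Type*) [Ring S] (M : Type*) [AddCommGroup M] [Module Sᵐᵒᵖ M]
    (N : Type*) [AddCommGroup N] [Module S N] : AddCommGroup (BalTensor S M N) :=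
  QuotientAddGroup.Quotient.addCommGroup _

/-- The elementary tensor `m ⊗ n` in the balanced tensor product `M ⊗[S] N`. -/
def BalTensor.tmul (S : Type*) [Ring S] (M : Type*) [AddCommGroup M] [Module Sᵐᵒᵖ M]
    (N : Type*) [AddCommGroup N] [Module S N] (m : M) (n : N) : BalTensor S M N :=
  QuotientAddGroup.mk (m ⊗ₜ[ℤ] n)


/-- The canonical projection onto the balanced tensor product. -/
def BalTensor.mk (S : Type*) [Ring S] (M : Type*) [AddCommGroup M] [Module Sᵐᵒᵖ M]
    (N : Type*) [AddCommGroup N] [Module S N] (x : M ⊗[ℤ] N) : BalTensor S M N :=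
  QuotientAddGroup.mk x

/-- The left action of `r : R` on `M ⊗[ℤ] N` through the first factor. -/
def lsmulAux (R : Type*) [Ring R] (M : Type*) [AddCommGroup M] [Module R M]
    (N : Type*) [AddCommGroup N] (r : R) : M ⊗[ℤ] N →+ M ⊗[ℤ] N :=
  (LinearMap.rTensor N ((DistribMulAction.toAddMonoidHom M r).toIntLinearMap)).toAddMonoidHom

/-- The right action of `t : Tᵐᵒᵖ` on `M ⊗[ℤ] N` through the second factor. -/
def rsmulAux (T : Type*) [Ring T] (M : Type*) [AddCommGroup M]
    (N : Type*) [AddCommGroup N] [Module Tᵐᵒᵖ N] (t : Tᵐᵒᵖ) : M ⊗[ℤ] N →+ M ⊗[ℤ] N :=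
  (LinearMap.lTensor M ((DistribMulAction.toAddMonoidHom N t).toIntLinearMap)).toAddMonoidHom

section LeftAction

variable (R S : Type*) [Ring R] [Ring S]
  (M : Type*) [AddCommGroup M] [Module R M] [Module Sᵐᵒᵖ M] [SMulCommClass R Sᵐᵒᵖ M]
  (N : Type*) [AddCommGroup N] [Module S N]

theorem lsmulAux_le (r : R) :
    balRel S M N ≤ (balRel S M N).comap (lsmulAux R M N r) := by
  rw [balRel, AddSubgroup.closure_le]
  rintro x ⟨m, s, n, rfl⟩
  simp only [SetLike.mem_coe, AddSubgroup.mem_comap, map_sub]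
  have h1 : lsmulAux R M N r ((op s • m) ⊗ₜ[ℤ] n) = (op s • (r • m)) ⊗ₜ[ℤ] n := by
    simp [lsmulAux, LinearMap.rTensor_tmul, smul_comm]
  have h2 : lsmulAux R M N r (m ⊗ₜ[ℤ] (s • n)) = (r • m) ⊗ₜ[ℤ] (s • n) := by
    simp [lsmulAux, LinearMap.rTensor_tmul]
  rw [h1, h2]
  exact AddSubgroup.subset_closure ⟨r • m, s, n, rfl⟩

instance : SMul R (BalTensor S M N) :=
  ⟨fun r => QuotientAddGroup.map _ _ (lsmulAux R M N r) (lsmulAux_le R S M N r)⟩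

theorem BalTensor.lsmul_mk (r : R) (x : M ⊗[ℤ] N) :
    r • (BalTensor.mk S M N x) = BalTensor.mk S M N (lsmulAux R M N r x) := rfl

instance : Module R (BalTensor S M N) where
  smul r x := r • x
  one_smul x := by
    induction x using QuotientAddGroup.induction_on with
    | H y =>
      show QuotientAddGroup.mk (lsmulAux R M N 1 y) = _
      congr 1
      induction y using TensorProduct.induction_on with
      | zero => simp
      | tmul m n => simp [lsmulAux]
      | add a b ha hb => simp only [map_add, ha, hb]
  mul_smul a b x := by
    induction x using QuotientAddGroup.induction_on with
    | H y =>
      show QuotientAddGroup.mk (lsmulAux R M N (a * b) y) =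
        QuotientAddGroup.mk (lsmulAux R M N a (lsmulAux R M N b y))
      congr 1
      induction y using TensorProduct.induction_on with
      | zero => simp
      | tmul m n => simp [lsmulAux, mul_smul]
      | add a' b' ha hb => simp only [map_add, ha, hb]
  smul_zero r := map_zero (QuotientAddGroup.map _ _ (lsmulAux R M N r) (lsmulAux_le R S M N r))
  smul_add r x y := map_add (QuotientAddGroup.map _ _ (lsmulAux R M N r) (lsmulAux_le R S M N r)) x y
  add_smul a b x := by
    induction x using QuotientAddGroup.induction_on with
    | H y =>
      show QuotientAddGroup.mk (lsmulAux R M N (a + b) y) =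
        QuotientAddGroup.mk (lsmulAux R M N a y) + QuotientAddGroup.mk (lsmulAux R M N b y)
      show (QuotientAddGroup.mk (lsmulAux R M N (a + b) y) : (M ⊗[ℤ] N) ⧸ balRel S M N) =
        QuotientAddGroup.mk (lsmulAux R M N a y + lsmulAux R M N b y)
      congr 1
      induction y using TensorProduct.induction_on with
      | zero => simp
      | tmul m n => simp [lsmulAux, add_smul, TensorProduct.add_tmul]
      | add a' b' ha hb =>
        simp only [map_add, ha, hb]
        abel
  zero_smul x := by
    induction x using QuotientAddGroup.induction_on with
    | H y =>
      show QuotientAddGroup.mk (lsmulAux R M N (0 : R) y) = 0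
      have : lsmulAux R M N (0 : R) y = 0 := by
        induction y using TensorProduct.induction_on with
        | zero => simp
        | tmul m n => simp [lsmulAux]
        | add a' b' ha hb => simp only [map_add, ha, hb]; abel
      rw [this]
      rfl

theorem BalTensor.smul_tmul (r : R) (m : M) (n : N) :
    r • (BalTensor.tmul S M N m n) = BalTensor.tmul S M N (r • m) n := by
  show QuotientAddGroup.mk (lsmulAux R M N r (m ⊗ₜ[ℤ] n)) = _
  rw [BalTensor.tmul]
  congr 1

end LeftAction

section RightAction

variable (S T : Type*) [Ring S] [Ring T]
  (M : Type*) [AddCommGroup M] [Module Sᵐᵒᵖ M]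
  (N : Type*) [AddCommGroup N] [Module S N] [Module Tᵐᵒᵖ N] [SMulCommClass S Tᵐᵒᵖ N]

theorem rsmulAux_le (t : Tᵐᵒᵖ) :
    balRel S M N ≤ (balRel S M N).comap (rsmulAux T M N t) := by
  rw [balRel, AddSubgroup.closure_le]
  rintro x ⟨m, s, n, rfl⟩
  simp only [SetLike.mem_coe, AddSubgroup.mem_comap, map_sub]
  have h1 : rsmulAux T M N t ((op s • m) ⊗ₜ[ℤ] n) = (op s • m) ⊗ₜ[ℤ] (t • n) := by
    simp [rsmulAux, LinearMap.lTensor_tmul]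
  have h2 : rsmulAux T M N t (m ⊗ₜ[ℤ] (s • n)) = m ⊗ₜ[ℤ] (s • (t • n)) := by
    simp [rsmulAux, LinearMap.lTensor_tmul, smul_comm]
  rw [h1, h2]
  exact AddSubgroup.subset_closure ⟨m, s, t • n, rfl⟩

instance : SMul Tᵐᵒᵖ (BalTensor S M N) :=
  ⟨fun t => QuotientAddGroup.map _ _ (rsmulAux T M N t) (rsmulAux_le S T M N t)⟩

theorem BalTensor.rsmul_mk (t : Tᵐᵒᵖ) (x : M ⊗[ℤ] N) :
    t • (BalTensor.mk S M N x) = BalTensor.mk S M N (rsmulAux T M N t x) := rfl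

instance : Module Tᵐᵒᵖ (BalTensor S M N) where
  smul t x := t • x
  one_smul x := by
    induction x using QuotientAddGroup.induction_on with
    | H y =>
      show QuotientAddGroup.mk (rsmulAux T M N 1 y) = _
      congr 1
      induction y using TensorProduct.induction_on with
      | zero => simp
      | tmul m n => simp [rsmulAux]
      | add a b ha hb => simp only [map_add, ha, hb]
  mul_smul a b x := by
    induction x using QuotientAddGroup.induction_on with
    | H y =>
      show QuotientAddGroup.mk (rsmulAux T M N (a * b) y) =
        QuotientAddGroup.mk (rsmulAux T M N a (rsmulAux T M N b y))
      congr 1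
      induction y using TensorProduct.induction_on with
      | zero => simp
      | tmul m n => simp [rsmulAux, mul_smul]
      | add a' b' ha hb => simp only [map_add, ha, hb]
  smul_zero t := map_zero (QuotientAddGroup.map _ _ (rsmulAux T M N t) (rsmulAux_le S T M N t))
  smul_add t x y := map_add (QuotientAddGroup.map _ _ (rsmulAux T M N t) (rsmulAux_le S T M N t)) x y
  add_smul a b x := by
    induction x using QuotientAddGroup.induction_on with
    | H y =>
      show QuotientAddGroup.mk (rsmulAux T M N (a + b) y) =
        QuotientAddGroup.mk (rsmulAux T M N a y) + QuotientAddGroup.mk (rsmulAux T M N b y)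
      show (QuotientAddGroup.mk (rsmulAux T M N (a + b) y) : (M ⊗[ℤ] N) ⧸ balRel S M N) =
        QuotientAddGroup.mk (rsmulAux T M N a y + rsmulAux T M N b y)
      congr 1
      induction y using TensorProduct.induction_on with
      | zero => simp
      | tmul m n => simp [rsmulAux, add_smul, TensorProduct.tmul_add]
      | add a' b' ha hb =>
        simp only [map_add, ha, hb]
        abel
  zero_smul x := by
    induction x using QuotientAddGroup.induction_on with
    | H y =>
      show QuotientAddGroup.mk (rsmulAux T M N (0 : Tᵐᵒᵖ) y) = 0
      have : rsmulAux T M N (0 : Tᵐᵒᵖ) y = 0 := by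
        induction y using TensorProduct.induction_on with
        | zero => simp
        | tmul m n => simp [rsmulAux]
        | add a' b' ha hb => simp only [map_add, ha, hb]; abel
      rw [this]
      rfl

theorem BalTensor.tmul_smul (t : Tᵐᵒᵖ) (m : M) (n : N) :
    t • (BalTensor.tmul S M N m n) = BalTensor.tmul S M N m (t • n) := by
  show QuotientAddGroup.mk (rsmulAux T M N t (m ⊗ₜ[ℤ] n)) = _
  rw [BalTensor.tmul]
  congr 1

end RightAction

section Bimodule

variable (R S T : Type*) [Ring R] [Ring S] [Ring T]
  (M : Type*) [AddCommGroup M] [Module R M] [Module Sᵐᵒᵖ M] [SMulCommClass R Sᵐᵒᵖ M]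
  (N : Type*) [AddCommGroup N] [Module S N] [Module Tᵐᵒᵖ N] [SMulCommClass S Tᵐᵒᵖ N]

instance : SMulCommClass R Tᵐᵒᵖ (BalTensor S M N) where
  smul_comm r t x := by
    induction x using QuotientAddGroup.induction_on with
    | H y =>
      show QuotientAddGroup.mk (lsmulAux R M N r (rsmulAux T M N t y)) =
        QuotientAddGroup.mk (rsmulAux T M N t (lsmulAux R M N r y))
      congr 1
      induction y using TensorProduct.induction_on with
      | zero => simp
      | tmul m n => simp [rsmulAux, lsmulAux]
      | add a b ha hb => simp only [map_add, ha, hb]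

end Bimodule

end

end Paper

/-! Pick `u ∈ M ⊗[S] N` and `v ∈ N ⊗[R] M` with `eR u = 1` and `eS v = 1`, written as finite sums
`u = ∑ mᵢ ⊗ nᵢ` and `v = ∑ n'ⱼ ⊗ m'ⱼ`. Contraction with `v`, `m ↦ ∑ eR (m ⊗ n'ⱼ) • m'ⱼ`, and
contraction with `u`, `m ↦ ∑ mᵢ • eS (nᵢ ⊗ m)`, are mutually inverse maps `M → M` (nothing relates
`eR` and `eS`, so neither need be the identity). The first is `R`-linear and factors through `Rʲ`,
the second is `Sᵐᵒᵖ`-linear and factors through `(Sᵐᵒᵖ)ⁱ`, so on either side `M` is a direct summand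
of a finite free module. -/

namespace Paper

theorem finite_projective_of_bijective_sum_smul {R M ι : Type*} [Ring R] [AddCommGroup M]
    [Module R M] (s : Finset ι) (f : ι → M →ₗ[R] R) (a : ι → M)
    (h : Function.Bijective fun m => ∑ i ∈ s, f i m • a i) :
    Module.Finite R M ∧ Module.Projective R M := by
  let g : M →ₗ[R] (s → R) := LinearMap.pi fun i => f i
  let pr : (s → R) →ₗ[R] M := Fintype.linearCombination R fun i => a i
  let e : M ≃ₗ[R] M := LinearEquiv.ofBijective (pr ∘ₗ g) <| by
    convert h using 2 with m
    simpa [g, pr, Fintype.linearCombination_apply] using Finset.sum_attach s fun i => f i m • a i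
  have hsplit : pr ∘ₗ (g ∘ₗ e.symm.toLinearMap) = LinearMap.id := by
    ext m
    exact e.apply_symm_apply m
  exact ⟨Module.Finite.of_surjective pr fun m => ⟨_, LinearMap.congr_fun hsplit m⟩,
    Module.Projective.of_split _ _ hsplit⟩

namespace BalTensor

variable {S : Type*} [Ring S] {M : Type*} [AddCommGroup M] [Module Sᵐᵒᵖ M]
  {N : Type*} [AddCommGroup N] [Module S N]

theorem add_tmul (m₁ m₂ : M) (n : N) :
    tmul S M N (m₁ + m₂) n = tmul S M N m₁ n + tmul S M N m₂ n :=
  congrArg (QuotientAddGroup.mk (s := balRel S M N)) (TensorProduct.add_tmul m₁ m₂ n)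

theorem tmul_add (m : M) (n₁ n₂ : N) :
    tmul S M N m (n₁ + n₂) = tmul S M N m n₁ + tmul S M N m n₂ :=
  congrArg (QuotientAddGroup.mk (s := balRel S M N)) (TensorProduct.tmul_add m n₁ n₂)

theorem op_smul_tmul (s : S) (m : M) (n : N) :
    tmul S M N (op s • m) n = tmul S M N m (s • n) :=
  (QuotientAddGroup.eq_iff_sub_mem).2 (AddSubgroup.subset_closure ⟨m, s, n, rfl⟩)

@[elab_as_elim]
theorem induction_on {motive : BalTensor S M N → Prop} (x : BalTensor S M N)
    (tmul : ∀ m n, motive (tmul S M N m n)) (add : ∀ x y, motive x → motive y → motive (x + y)) :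
    motive x := by
  induction x using QuotientAddGroup.induction_on with
  | H y =>
    induction y using TensorProduct.induction_on with
    | zero => simpa [BalTensor.tmul] using tmul 0 0
    | tmul m n => exact tmul m n
    | add y₁ y₂ h₁ h₂ => exact add _ _ h₁ h₂

theorem exists_finset (x : BalTensor S M N) :
    ∃ A : Finset (M × N), x = ∑ p ∈ A, tmul S M N p.1 p.2 := by
  obtain ⟨y, rfl⟩ := QuotientAddGroup.mk_surjective x
  obtain ⟨A, rfl⟩ := TensorProduct.exists_finset y
  exact ⟨A, map_sum (QuotientAddGroup.mk' (balRel S M N)) _ A⟩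

def lift {P : Type*} [AddCommGroup P] (f : M →+ N →+ P)
    (hf : ∀ (m : M) (s : S) (n : N), f (op s • m) n = f m (s • n)) :
    BalTensor S M N →+ P :=
  QuotientAddGroup.lift (balRel S M N)
    (TensorProduct.liftAddHom f fun c m n => by
      rw [map_zsmul f c m, AddMonoidHom.smul_apply, ← map_zsmul (f m) c n])
    (by
      rw [balRel, AddSubgroup.closure_le]
      rintro _ ⟨m, s, n, rfl⟩
      simp [hf])

end BalTensor

theorem smul_symm_one {A X : Type*} [MulOneClass A] [Add A] [Add X] [SMul A X] (e : X ≃+ A)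
    (he : ∀ (a : A) (x : X), e (a • x) = a * e x) (a : A) : a • e.symm 1 = e.symm a :=
  e.injective (by rw [he, e.apply_symm_apply, e.apply_symm_apply, mul_one])

theorem op_smul_symm_one {A X : Type*} [MulOneClass A] [Add A] [Add X] [SMul Aᵐᵒᵖ X]
    (e : X ≃+ A) (he : ∀ (a : A) (x : X), e (op a • x) = e x * a) (a : A) :
    op a • e.symm 1 = e.symm a :=
  e.injective (by rw [he, e.apply_symm_apply, e.apply_symm_apply, one_mul])

section Contraction

variable {R S : Type*} [Ring R] [Ring S] {M : Type*} [AddCommGroup M] [Module R M] [Module Sᵐᵒᵖ M]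
  {N : Type*} [AddCommGroup N]

def leftPairing [Module S N] [SMulCommClass R Sᵐᵒᵖ M] (eR : BalTensor S M N ≃+ R)
    (hR : ∀ (r : R) (x : BalTensor S M N), eR (r • x) = r * eR x) (n : N) : M →ₗ[R] R where
  toFun m := eR (BalTensor.tmul S M N m n)
  map_add' m₁ m₂ := by rw [BalTensor.add_tmul, map_add]
  map_smul' r m := by rw [← BalTensor.smul_tmul, hR, RingHom.id_apply, smul_eq_mul]

def rightPairing [Module Rᵐᵒᵖ N] [SMulCommClass R Sᵐᵒᵖ M] (eS : BalTensor R N M ≃+ S)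
    (hS : ∀ (s : S) (x : BalTensor R N M), eS (op s • x) = eS x * s) (n : N) :
    M →ₗ[Sᵐᵒᵖ] Sᵐᵒᵖ where
  toFun m := op (eS (BalTensor.tmul R N M n m))
  map_add' m₁ m₂ := by rw [BalTensor.tmul_add, map_add, op_add]
  map_smul' s m := by
    rw [← BalTensor.tmul_smul, ← op_unop s, hS, op_mul, RingHom.id_apply, smul_eq_mul]

variable [Module S N] [Module Rᵐᵒᵖ N] [SMulCommClass S Rᵐᵒᵖ N]

def contractLeft (eR : BalTensor S M N ≃+ R)
    (hR : ∀ (r : R) (x : BalTensor S M N), eR (op r • x) = eR x * r) (m : M) :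
    BalTensor R N M →+ M :=
  BalTensor.lift
    (AddMonoidHom.mk' (fun n => DistribSMul.toAddMonoidHom M (eR (BalTensor.tmul S M N m n)))
      fun n₁ n₂ => by ext z; simp [BalTensor.tmul_add, add_smul])
    fun n r z => by simp [← BalTensor.tmul_smul, hR, mul_smul]

@[simp]
theorem contractLeft_tmul (eR : BalTensor S M N ≃+ R)
    (hR : ∀ (r : R) (x : BalTensor S M N), eR (op r • x) = eR x * r) (m : M) (n : N) (z : M) :
    contractLeft eR hR m (BalTensor.tmul R N M n z) = eR (BalTensor.tmul S M N m n) • z :=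
  rfl

theorem contractLeft_add (eR : BalTensor S M N ≃+ R)
    (hR : ∀ (r : R) (x : BalTensor S M N), eR (op r • x) = eR x * r) (m₁ m₂ : M)
    (y : BalTensor R N M) :
    contractLeft eR hR (m₁ + m₂) y = contractLeft eR hR m₁ y + contractLeft eR hR m₂ y := by
  induction y using BalTensor.induction_on with
  | tmul n z => simp [BalTensor.add_tmul, add_smul]
  | add y₁ y₂ h₁ h₂ => simp only [map_add, h₁, h₂]; abel

theorem contractLeft_op_smul (eR : BalTensor S M N ≃+ R)
    (hR : ∀ (r : R) (x : BalTensor S M N), eR (op r • x) = eR x * r) (s : S) (m : M)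
    (y : BalTensor R N M) :
    contractLeft eR hR (op s • m) y = contractLeft eR hR m (s • y) := by
  induction y using BalTensor.induction_on with
  | tmul n z => rw [BalTensor.smul_tmul, contractLeft_tmul, contractLeft_tmul,
      BalTensor.op_smul_tmul]
  | add y₁ y₂ h₁ h₂ =>
    rw [map_add, h₁, h₂, ← map_add]
    exact congrArg _ (smul_add s y₁ y₂).symm

def contractRight (eS : BalTensor R N M ≃+ S)
    (hS : ∀ (s : S) (x : BalTensor R N M), eS (s • x) = s * eS x) (z : M) :
    BalTensor S M N →+ M :=
  BalTensor.lift
    (AddMonoidHom.mk' (fun m => AddMonoidHom.mk'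
        (fun n => op (eS (BalTensor.tmul R N M n z)) • m)
        fun n₁ n₂ => by simp [BalTensor.add_tmul, add_smul])
      fun m₁ m₂ => by ext n; simp)
    fun m s n => by simp [← BalTensor.smul_tmul, hS, mul_smul]

@[simp]
theorem contractRight_tmul (eS : BalTensor R N M ≃+ S)
    (hS : ∀ (s : S) (x : BalTensor R N M), eS (s • x) = s * eS x) (z m : M) (n : N) :
    contractRight eS hS z (BalTensor.tmul S M N m n) = op (eS (BalTensor.tmul R N M n z)) • m :=
  rfl

theorem contractRight_add (eS : BalTensor R N M ≃+ S)
    (hS : ∀ (s : S) (x : BalTensor R N M), eS (s • x) = s * eS x) (z₁ z₂ : M)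
    (x : BalTensor S M N) :
    contractRight eS hS (z₁ + z₂) x = contractRight eS hS z₁ x + contractRight eS hS z₂ x := by
  induction x using BalTensor.induction_on with
  | tmul m n => simp [BalTensor.tmul_add, add_smul]
  | add x₁ x₂ h₁ h₂ => simp only [map_add, h₁, h₂]; abel

theorem contractRight_smul (eS : BalTensor R N M ≃+ S) (hS : ∀ (s : S) (x : BalTensor R N M), eS (s • x) = s * eS x)
    (r : R) (z : M) (x : BalTensor S M N) :
    contractRight eS hS (r • z) x = contractRight eS hS z (op r • x) := by
  induction x using BalTensor.induction_on with
  | tmul m n => rw [BalTensor.tmul_smul, contractRight_tmul, contractRight_tmul,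
      BalTensor.op_smul_tmul]
  | add x₁ x₂ h₁ h₂ =>
    rw [map_add, h₁, h₂, ← map_add]
    exact congrArg _ (smul_add (op r) x₁ x₂).symm

theorem contractLeft_contractRight [SMulCommClass R Sᵐᵒᵖ M] (eR : BalTensor S M N ≃+ R)
    (hR : ∀ (r : R) (x : BalTensor S M N), eR (op r • x) = eR x * r) (eS : BalTensor R N M ≃+ S)
    (hS : ∀ (s : S) (x : BalTensor R N M), eS (s • x) = s * eS x) (z : M) (x : BalTensor S M N) :
    contractLeft eR hR (contractRight eS hS z x) (eS.symm 1) = eR x • z := by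
  induction x using BalTensor.induction_on with
  | tmul m n => rw [contractRight_tmul, contractLeft_op_smul, smul_symm_one eS hS,
      eS.symm_apply_apply, contractLeft_tmul]
  | add x₁ x₂ h₁ h₂ => rw [map_add, contractLeft_add, h₁, h₂, map_add, add_smul]

theorem contractRight_contractLeft [SMulCommClass R Sᵐᵒᵖ M] (eR : BalTensor S M N ≃+ R)
    (hR : ∀ (r : R) (x : BalTensor S M N), eR (op r • x) = eR x * r) (eS : BalTensor R N M ≃+ S)
    (hS : ∀ (s : S) (x : BalTensor R N M), eS (s • x) = s * eS x) (m : M) (y : BalTensor R N M) :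
    contractRight eS hS (contractLeft eR hR m y) (eR.symm 1) = op (eS y) • m := by
  induction y using BalTensor.induction_on with
  | tmul n z => rw [contractLeft_tmul, contractRight_smul, op_smul_symm_one eR hR,
      eR.symm_apply_apply, contractRight_tmul]
  | add y₁ y₂ h₁ h₂ => rw [map_add, contractRight_add, h₁, h₂, map_add, op_add, add_smul]

theorem bijective_contractLeft [SMulCommClass R Sᵐᵒᵖ M] (eR : BalTensor S M N ≃+ R)
    (hR : ∀ (r : R) (x : BalTensor S M N), eR (op r • x) = eR x * r) (eS : BalTensor R N M ≃+ S)
    (hS : ∀ (s : S) (x : BalTensor R N M), eS (s • x) = s * eS x) :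
    Function.Bijective fun m => contractLeft eR hR m (eS.symm 1) := by
  refine Function.bijective_iff_has_inverse.2 ⟨fun z => contractRight eS hS z (eR.symm 1), ?_, ?_⟩
  · intro m
    dsimp only
    rw [contractRight_contractLeft, eS.apply_symm_apply, op_one, one_smul]
  · intro z
    dsimp only
    rw [contractLeft_contractRight, eR.apply_symm_apply, one_smul]

theorem bijective_contractRight [SMulCommClass R Sᵐᵒᵖ M] (eR : BalTensor S M N ≃+ R)
    (hR : ∀ (r : R) (x : BalTensor S M N), eR (op r • x) = eR x * r) (eS : BalTensor R N M ≃+ S)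
    (hS : ∀ (s : S) (x : BalTensor R N M), eS (s • x) = s * eS x) :
    Function.Bijective fun z => contractRight eS hS z (eR.symm 1) := by
  refine Function.bijective_iff_has_inverse.2 ⟨fun m => contractLeft eR hR m (eS.symm 1), ?_, ?_⟩
  · intro z
    dsimp only
    rw [contractLeft_contractRight, eR.apply_symm_apply, one_smul]
  · intro m
    dsimp only
    rw [contractRight_contractLeft, eS.apply_symm_apply, op_one, one_smul]

end Contraction

end Paper

open Paper MulOpposite in
/-- **part of 'Morita I'.** Let `R, S` be rings and `M` an `(R,S)`-bimodule
which is an equivalence bimodule (i.e. there is an `(S,R)`-bimodule `N` with `(R,R)`- and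
`(S,S)`-bimodule isomorphisms `M ⊗[S] N ≅ R` and `N ⊗[R] M ≅ S`). Then `M` is finitely
generated and projective as a left `R`-module, and finitely generated and projective as a
right `S`-module (i.e. as a left module over the opposite ring `Sᵒᵖ`). -/
theorem equivalence_bimodule_finite_projective
    (R S : Type*) [Ring R] [Ring S]
    (M : Type*) [AddCommGroup M] [Module R M] [Module Sᵐᵒᵖ M] [SMulCommClass R Sᵐᵒᵖ M]
    (N : Type*) [AddCommGroup N] [Module S N] [Module Rᵐᵒᵖ N] [SMulCommClass S Rᵐᵒᵖ N]
    (eR : BalTensor S M N ≃+ R)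
    (eR_left : ∀ (r : R) (x : BalTensor S M N), eR (r • x) = r * eR x)
    (eR_right : ∀ (r : R) (x : BalTensor S M N), eR (op r • x) = eR x * r)
    (eS : BalTensor R N M ≃+ S)
    (eS_left : ∀ (s : S) (x : BalTensor R N M), eS (s • x) = s * eS x)
    (eS_right : ∀ (s : S) (x : BalTensor R N M), eS (op s • x) = eS x * s) :
    Module.Finite R M ∧ Module.Projective R M ∧
    Module.Finite Sᵐᵒᵖ M ∧ Module.Projective Sᵐᵒᵖ M := by
  obtain ⟨A, hA⟩ := BalTensor.exists_finset (eR.symm 1)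
  obtain ⟨B, hB⟩ := BalTensor.exists_finset (eS.symm 1)
  have hψ := bijective_contractLeft eR eR_right eS eS_left
  have hχ := bijective_contractRight eR eR_right eS eS_left
  simp only [hA, hB, map_sum, contractLeft_tmul, contractRight_tmul] at hψ hχ
  exact and_assoc.1
    ⟨finite_projective_of_bijective_sum_smul B (fun q => leftPairing eR eR_left q.1) Prod.snd hψ,
      finite_projective_of_bijective_sum_smul A (fun p => rightPairing eS eS_right p.2) Prod.fst hχ⟩
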